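/- Lower bounding theorem for index-based linear detrending subsequence matching (abstract form): suppose Q̄ and S̄ are sequences of length n = p·ω divided into p disjoint windows q̄_1,…,q̄_p and s̄_1,…,s̄_p; suppose T : ℝ^ω → ℝ^f satisfies the lower bounding property c·D(T(u),T(v)) ≤ D(u,v) for some constant c ≥ 1 and all u, v ∈ ℝ^ω; and suppose for each k, M_k is an axis-aligned box in ℝ^f containing T(s̄_k). If D(Q̄, S̄) ≤ ε, then there exists k ∈ {1,…,p} with mindist(T(q̄_k), M_k) ≤ ε/√p. -/
import Mathlib


open Finset

noncomputable def lsSlope (n : ℕ) (X : Fin n → ℝ) : ℝ :=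
  ((n : ℝ) * ∑ k, ((k.1 : ℝ) + 1) * X k -
      (∑ k : Fin n, ((k.1 : ℝ) + 1)) * ∑ k, X k) /
    ((n : ℝ) * ∑ k : Fin n, ((k.1 : ℝ) + 1) ^ 2 -
      (∑ k : Fin n, ((k.1 : ℝ) + 1)) ^ 2)

noncomputable def lsIntercept (n : ℕ) (X : Fin n → ℝ) : ℝ :=
  (∑ k, X k) / n - lsSlope n X * (∑ k : Fin n, ((k.1 : ℝ) + 1)) / n

noncomputable def LD (n : ℕ) (X : Fin n → ℝ) : Fin n → ℝ :=
  fun k => X k - (lsSlope n X * ((k.1 : ℝ) + 1) + lsIntercept n X)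

noncomputable def eucDist (n : ℕ) (X Y : Fin n → ℝ) : ℝ :=
  Real.sqrt (∑ k, (X k - Y k) ^ 2)

def window (p w : ℕ) (X : Fin (p * w) → ℝ) (k : Fin p) : Fin w → ℝ :=
  fun j => X ⟨k.1 * w + j.1, by
    calc k.1 * w + j.1 < k.1 * w + w := Nat.add_lt_add_left j.2 _
    _ = (k.1 + 1) * w := by ring
    _ ≤ p * w := Nat.mul_le_mul_right w k.2⟩

noncomputable def mindist (f : ℕ) (q L U : Fin f → ℝ) : ℝ :=
  Real.sqrt (∑ i, max (max (L i - q i) 0) (q i - U i) ^ 2)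

theorem stmt13 (p w f : ℕ) (hp : 1 ≤ p) (hw : 1 ≤ w) (hf : 1 ≤ f)
    (Q S : Fin (p * w) → ℝ) (T : (Fin w → ℝ) → (Fin f → ℝ)) (c : ℝ) (hc : 1 ≤ c)
    (hT : ∀ u v : Fin w → ℝ, c * eucDist f (T u) (T v) ≤ eucDist w u v)
    (L U : Fin p → Fin f → ℝ) (hLU : ∀ k i, L k i ≤ U k i)
    (hbox : ∀ k i, L k i ≤ T (window p w S k) i ∧ T (window p w S k) i ≤ U k i)
    (eps : ℝ) (h : eucDist (p * w) Q S ≤ eps) :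
    ∃ k : Fin p, mindist f (T (window p w Q k)) (L k) (U k) ≤ eps / Real.sqrt p := by
  have hps : (0:ℝ) < p := by exact_mod_cast hp
  set A : Fin p → ℝ := fun k => ∑ j, (window p w Q k j - window p w S k j) ^ 2 with hA
  have hsum : ∑ k, A k = ∑ i, (Q i - S i) ^ 2 := by
    simp only [hA]
    rw [show (∑ i : Fin (p*w), (Q i - S i)^2)
        = ∑ x : Fin p × Fin w, (Q (finProdFinEquiv x) - S (finProdFinEquiv x))^2 from
        (Fintype.sum_equiv finProdFinEquiv _ _ (fun x => rfl)).symm,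
      Fintype.sum_prod_type]
    refine Finset.sum_congr rfl fun k _ => Finset.sum_congr rfl fun j _ => ?_
    simp only [window]
    congr 2 <;> · congr 1; apply Fin.ext; simp [finProdFinEquiv]; ring
  have heps0 : 0 ≤ eps := le_trans (Real.sqrt_nonneg _) h
  have hsumle : ∑ k, A k ≤ eps ^ 2 := by
    rw [hsum]
    calc ∑ i, (Q i - S i) ^ 2 = (eucDist (p*w) Q S) ^ 2 := by
          rw [eucDist, Real.sq_sqrt (Finset.sum_nonneg fun i _ => sq_nonneg _)]
      _ ≤ eps ^ 2 := pow_le_pow_left₀ (Real.sqrt_nonneg _) h 2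
  obtain ⟨k, hk⟩ : ∃ k : Fin p, A k ≤ eps ^ 2 / p := by
    by_contra hcon
    push_neg at hcon
    have hne : (Finset.univ : Finset (Fin p)).Nonempty := by
      rw [Finset.univ_nonempty_iff, ← Fin.pos_iff_nonempty]; omega
    have : ∑ _k : Fin p, (eps ^ 2 / p) < ∑ k, A k :=
      Finset.sum_lt_sum_of_nonempty hne (fun k _ => hcon k)
    rw [Finset.sum_const, Finset.card_univ, Fintype.card_fin, nsmul_eq_mul,
      mul_div_cancel₀ _ (ne_of_gt hps)] at this
    linarith
  refine ⟨k, ?_⟩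
  have hdw : eucDist w (window p w Q k) (window p w S k) ≤ eps / Real.sqrt p := by
    calc eucDist w (window p w Q k) (window p w S k)
        ≤ Real.sqrt (eps ^ 2 / p) := Real.sqrt_le_sqrt hk
      _ = eps / Real.sqrt p := by
          rw [Real.sqrt_div (sq_nonneg eps), Real.sqrt_sq heps0]
  have hdist : eucDist f (T (window p w Q k)) (T (window p w S k)) ≤ eps / Real.sqrt p := by
    have h1 : 0 ≤ eucDist f (T (window p w Q k)) (T (window p w S k)) := Real.sqrt_nonneg _
    have := hT (window p w Q k) (window p w S k)
    nlinarith
  refine le_trans ?_ hdist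
  rw [mindist, eucDist]
  apply Real.sqrt_le_sqrt
  apply Finset.sum_le_sum
  intro i _
  set q := T (window p w Q k) i
  set s := T (window p w S k) i
  obtain ⟨hL, hU⟩ := hbox k i
  have hm : max (max (L k i - q) 0) (q - s) ≤ |q - s| := by
    apply max_le (max_le _ (abs_nonneg _)) (le_abs_self _)
    calc L k i - q ≤ s - q := by linarith
      _ ≤ |q - s| := by rw [abs_sub_comm]; exact le_abs_self _
  have hm' : max (max (L k i - q) 0) (q - U k i) ≤ |q - s| := by
    refine le_trans ?_ hm
    apply max_le (le_max_left _ _)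
    exact le_trans (by linarith) (le_max_right _ (q - s))
  calc max (max (L k i - q) 0) (q - U k i) ^ 2 ≤ |q - s| ^ 2 :=
        pow_le_pow_left₀ (le_max_of_le_left (le_max_right _ _)) hm' 2
    _ = (q - s) ^ 2 := sq_abs _
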